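/- De Carvalho's correspondence for the KAM: a closed lambda-term t has a complete KAM run of length w if and only if there is a derivation ⊢^w t : ⋆ in the multi type system with the additive weight assignment (T-Var weight 1, T-λ adds 1 to its premise, T-λ⋆ weight 0, T-@ adds 1 plus the sum of the weights of all premises). -/

import Mathlib

/-! ## Lambda terms -/

inductive Tm : Type
  | var : ℕ → Tm
  | lam : ℕ → Tm → Tm
  | app : Tm → Tm → Tm
deriving DecidableEq

def fv : Tm → Finset ℕ
  | .var x => {x}
  | .lam x t => fv t \ {x}
  | .app t u => fv t ∪ fv u

/-! ## The Krivine Abstract Machine -/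

mutual
inductive Clo : Type
  | mk : Tm → Env → Clo
inductive Env : Type
  | nil : Env
  | cons : ℕ → Clo → Env → Env
end

def Env.lookup : Env → ℕ → Option Clo
  | .nil, _ => none
  | .cons y c e, x => if x = y then some c else e.lookup x

structure State : Type where
  tm : Tm
  env : Env
  stk : List Clo

/-- KAM transitions. -/
inductive KAM : State → State → Prop
  | sea {t u : Tm} {e : Env} {S : List Clo} :
      KAM ⟨.app t u, e, S⟩ ⟨t, e, Clo.mk u e :: S⟩
  | beta {x : ℕ} {t : Tm} {e : Env} {c : Clo} {S : List Clo} :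
      KAM ⟨.lam x t, e, c :: S⟩ ⟨t, .cons x c e, S⟩
  | sub {x : ℕ} {e e' : Env} {u : Tm} {S : List Clo} :
      e.lookup x = some (Clo.mk u e') →
      KAM ⟨.var x, e, S⟩ ⟨u, e', S⟩

/-- Final states: no transition applies. -/
def Final (s : State) : Prop := ∀ s', ¬ KAM s s'

/-- `RunLen s s' n`: a run from `s` to `s'` of length `n`. -/
inductive RunLen : State → State → ℕ → Prop
  | refl (s : State) : RunLen s s 0
  | step {s s' s'' : State} {n : ℕ} :
      KAM s s' → RunLen s' s'' n → RunLen s s'' (n + 1)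

/-! ## Multi types (non-idempotent intersection types) -/

/-- Linear types `A ::= ⋆ | 𝒜 ⊸ A`, with multi types `𝒜` finite multisets
(represented as lists) of linear types. -/
inductive LTy : Type
  | star : LTy
  | arr : List LTy → LTy → LTy

/-- Type environments: each variable is assigned a multi type (the empty
multiset meaning the variable is not in the domain). -/
def Ctx : Type := ℕ → List LTy

def Ctx.empty : Ctx := fun _ => []

def Ctx.single (x : ℕ) (M : List LTy) : Ctx :=
  fun y => if y = x then M else []

def Ctx.union (Γ Δ : Ctx) : Ctx := fun y => Γ y ++ Δ y

/-- Removing a variable from a type environment. -/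
def Ctx.remove (Γ : Ctx) (x : ℕ) : Ctx := fun y => if y = x then [] else Γ y

mutual
/-- `TJ Γ t A w`: the judgment `Γ ⊢ t : A` is derivable with (additive)
weight `w`: T-Var has weight 1, T-λ adds 1 to its premise, T-λ⋆ has weight 0,
T-@ adds 1 plus the sum of the weights of all its premises. -/
inductive TJ : Ctx → Tm → LTy → ℕ → Prop
  | var {x : ℕ} {A : LTy} :
      TJ (Ctx.single x [A]) (.var x) A 1
  | lam {Γ : Ctx} {x : ℕ} {t : Tm} {A : LTy} {w : ℕ} :
      TJ Γ t A w →
      TJ (Γ.remove x) (.lam x t) (.arr (Γ x) A) (w + 1)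
  | lamStar {x : ℕ} {t : Tm} :
      TJ Ctx.empty (.lam x t) .star 0
  | app {Γ Δ : Ctx} {t u : Tm} {M : List LTy} {A : LTy} {w v : ℕ} :
      TJ Γ t (.arr M A) w → MJ Δ u M v →
      TJ (Γ.union Δ) (.app t u) A (w + v + 1)

/-- `MJ Δ u 𝒜 v`: the `n` argument premises of a T-@ rule, typing `u` once
for each linear type in the multiset `𝒜`; `v` is the sum of their weights and
`Δ` the sum of their type environments. -/
inductive MJ : Ctx → Tm → List LTy → ℕ → Prop
  | nil {u : Tm} : MJ Ctx.empty u [] 0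
  | cons {Δ Δ' : Ctx} {u : Tm} {A : LTy} {l : List LTy} {v v' : ℕ} :
      TJ Δ u A v → MJ Δ' u l v' →
      MJ (Δ.union Δ') u (A :: l) (v + v')
end

/-! ## Auxiliary: typing of closures, environments, stacks -/

mutual
def CJ : Clo → LTy → ℕ → Prop
  | .mk t e, A, w => ∃ Γ w1 w2, TJ Γ t A w1 ∧ EJ e Γ w2 ∧ w = w1 + w2
  termination_by c _ _ => (sizeOf c, 0)
  decreasing_by simp_wf <;> omega
def MCJ : Clo → List LTy → ℕ → Prop
  | _, [], w => w = 0
  | c, A :: l, w => ∃ w1 w2, CJ c A w1 ∧ MCJ c l w2 ∧ w = w1 + w2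
  termination_by c l _ => (sizeOf c, l.length + 1)
  decreasing_by all_goals simp_wf <;> omega
def EJ : Env → Ctx → ℕ → Prop
  | .nil, Γ, w => Γ = Ctx.empty ∧ w = 0
  | .cons x c e, Γ, w => ∃ M Γ' w1 w2, MCJ c M w1 ∧ EJ e Γ' w2 ∧ Γ' x = [] ∧
      Γ = Ctx.union (Ctx.single x M) Γ' ∧ w = w1 + w2
  termination_by e _ _ => (sizeOf e, 0)
  decreasing_by all_goals simp_wf <;> omega
end

inductive SJ : List Clo → LTy → ℕ → Prop
  | nil : SJ [] .star 0
  | cons {c S M A w1 w2} : MCJ c M w1 → SJ S A w2 → SJ (c :: S) (.arr M A) (w1 + w2)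
/-! ### Context facts -/

lemma ctx_decomp (Γ : Ctx) (x : ℕ) :
    Γ = Ctx.union (Ctx.single x (Γ x)) (Γ.remove x) := by
  funext z
  by_cases h : z = x <;> simp [Ctx.union, Ctx.single, Ctx.remove, h]

lemma ctx_remove_self (Γ : Ctx) (x : ℕ) : Γ.remove x x = [] := by simp [Ctx.remove]

/-! ### MCJ append -/

lemma MCJ_append {c : Clo} : ∀ {l1 l2 : List LTy} {w1 w2 : ℕ},
    MCJ c l1 w1 → MCJ c l2 w2 → MCJ c (l1 ++ l2) (w1 + w2) := by
  intro l1
  induction l1 with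
  | nil => intro l2 w1 w2 h1 h2; simp only [MCJ] at h1; simpa [h1] using h2
  | cons A l ih =>
    intro l2 w1 w2 h1 h2
    simp only [List.cons_append, MCJ] at h1 ⊢
    obtain ⟨a, b, hA, hl, rfl⟩ := h1
    exact ⟨a, b + w2, hA, ih hl h2, by omega⟩

lemma MCJ_append_inv {c : Clo} : ∀ {l1 l2 : List LTy} {w : ℕ},
    MCJ c (l1 ++ l2) w → ∃ w1 w2, MCJ c l1 w1 ∧ MCJ c l2 w2 ∧ w = w1 + w2 := by
  intro l1
  induction l1 with
  | nil => intro l2 w h; exact ⟨0, w, by simp only [MCJ], h, by omega⟩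
  | cons A l ih =>
    intro l2 w h
    simp only [List.cons_append, MCJ] at h
    obtain ⟨a, b, hA, hl, rfl⟩ := h
    obtain ⟨b1, b2, h1, h2, rfl⟩ := ih hl
    exact ⟨a + b1, b2, by simp only [MCJ]; exact ⟨a, b1, hA, h1, rfl⟩, h2, by omega⟩

/-! ### EJ lemmas -/

theorem EJ_empty : ∀ e : Env, EJ e Ctx.empty 0
  | .nil => by simp [EJ]
  | .cons x c e => by
    simp only [EJ]
    refine ⟨[], Ctx.empty, 0, 0, by simp [MCJ], EJ_empty e, rfl, ?_, by omega⟩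
    funext z; simp [Ctx.union, Ctx.single, Ctx.empty]

theorem EJ_empty_inv : ∀ (e : Env) {w : ℕ}, EJ e Ctx.empty w → w = 0
  | .nil, w, h => by simp only [EJ] at h; exact h.2
  | .cons x c e, w, h => by
    simp only [EJ] at h
    obtain ⟨M, Γ', w1, w2, hM, hE, hx, hΓ, rfl⟩ := h
    have hMx : M ++ Γ' x = Ctx.empty x := by
      have := congrFun hΓ x
      simp only [Ctx.union, Ctx.single, if_pos rfl] at this
      exact this.symm
    simp only [Ctx.empty, hx, List.append_nil] at hMx
    have hΓ' : Γ' = Ctx.empty := by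
      funext z
      by_cases h' : z = x
      · simp [h', hx, Ctx.empty]
      · have := congrFun hΓ z
        simp only [Ctx.union, Ctx.single, if_neg h', List.nil_append, Ctx.empty] at this ⊢
        exact this.symm
    subst hMx
    have h2 := EJ_empty_inv e (hΓ' ▸ hE)
    simp only [MCJ] at hM
    omega

theorem EJ_merge : ∀ (e : Env) {Γ1 Γ2 : Ctx} {w1 w2 : ℕ},
    EJ e Γ1 w1 → EJ e Γ2 w2 → EJ e (Ctx.union Γ1 Γ2) (w1 + w2)
  | .nil, Γ1, Γ2, w1, w2, h1, h2 => by
    simp only [EJ] at h1 h2 ⊢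
    obtain ⟨rfl, rfl⟩ := h1; obtain ⟨rfl, rfl⟩ := h2
    exact ⟨by funext z; rfl, by trivial⟩
  | .cons x c e, Γ1, Γ2, w1, w2, h1, h2 => by
    simp only [EJ] at h1 h2 ⊢
    obtain ⟨M1, Γ1', a1, b1, hM1, hE1, hx1, rfl, rfl⟩ := h1
    obtain ⟨M2, Γ2', a2, b2, hM2, hE2, hx2, rfl, rfl⟩ := h2
    refine ⟨M1 ++ M2, Ctx.union Γ1' Γ2', a1 + a2, b1 + b2,
      MCJ_append hM1 hM2, EJ_merge e hE1 hE2, by simp [Ctx.union, hx1, hx2], ?_, by omega⟩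
    funext z
    by_cases h' : z = x <;> simp [Ctx.union, Ctx.single, h', hx1, hx2]

theorem EJ_split : ∀ (e : Env) {Γ1 Γ2 : Ctx} {w : ℕ},
    EJ e (Ctx.union Γ1 Γ2) w → ∃ w1 w2, EJ e Γ1 w1 ∧ EJ e Γ2 w2 ∧ w = w1 + w2
  | .nil, Γ1, Γ2, w, h => by
    simp only [EJ] at h
    obtain ⟨hΓ, rfl⟩ := h
    have h1 : Γ1 = Ctx.empty := by
      funext z; have := congrFun hΓ z
      simp only [Ctx.union, Ctx.empty, List.append_eq_nil_iff] at this ⊢; exact this.1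
    have h2 : Γ2 = Ctx.empty := by
      funext z; have := congrFun hΓ z
      simp only [Ctx.union, Ctx.empty, List.append_eq_nil_iff] at this ⊢; exact this.2
    exact ⟨0, 0, by simp only [EJ]; exact ⟨h1, by trivial⟩, by simp only [EJ]; exact ⟨h2, by trivial⟩, rfl⟩
  | .cons x c e, Γ1, Γ2, w, h => by
    simp only [EJ] at h ⊢
    obtain ⟨M, Γ', a, b, hM, hE, hx, hΓ, rfl⟩ := h
    have hMx : M = Γ1 x ++ Γ2 x := by
      have := congrFun hΓ x
      simp [Ctx.union, Ctx.single, hx] at this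
      exact this.symm
    have hΓ' : Γ' = Ctx.union (Γ1.remove x) (Γ2.remove x) := by
      funext z
      by_cases h' : z = x
      · simp [h', hx, Ctx.union, Ctx.remove]
      · have := congrFun hΓ z
        simp only [Ctx.union, Ctx.single, Ctx.remove, if_neg h', List.nil_append] at this ⊢
        exact this.symm
    subst hMx
    obtain ⟨m1, m2, hm1, hm2, rfl⟩ := MCJ_append_inv hM
    obtain ⟨b1, b2, hb1, hb2, rfl⟩ := EJ_split e (hΓ' ▸ hE)
    exact ⟨m1 + b1, m2 + b2,
      ⟨Γ1 x, Γ1.remove x, m1, b1, hm1, hb1, ctx_remove_self _ _, ctx_decomp _ _, rfl⟩,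
      ⟨Γ2 x, Γ2.remove x, m2, b2, hm2, hb2, ctx_remove_self _ _, ctx_decomp _ _, rfl⟩,
      by omega⟩
theorem EJ_lookup : ∀ (e : Env) {Γ : Ctx} {w x : ℕ}, EJ e Γ w → Γ x ≠ [] →
    ∃ c w1 w2, e.lookup x = some c ∧ MCJ c (Γ x) w1 ∧ EJ e (Γ.remove x) w2 ∧ w = w1 + w2
  | .nil, Γ, w, x, h, hne => by
    simp only [EJ] at h
    exact absurd (congrFun h.1 x) hne
  | .cons y c e, Γ, w, x, h, hne => by
    simp only [EJ] at h
    obtain ⟨M, Γ', a, b, hM, hE, hy, rfl, rfl⟩ := h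
    by_cases hxy : x = y
    · subst hxy
      have hx : Ctx.union (Ctx.single x M) Γ' x = M := by
        simp [Ctx.union, Ctx.single, hy]
      refine ⟨c, a, b, by simp [Env.lookup], by rw [hx]; exact hM, ?_, rfl⟩
      have hrem : (Ctx.union (Ctx.single x M) Γ').remove x = Γ' := by
        funext z
        by_cases h' : z = x
        · simp [Ctx.remove, Ctx.union, Ctx.single, h', hy]
        · simp [Ctx.remove, Ctx.union, Ctx.single, h']
      rw [hrem]
      simp only [EJ]
      refine ⟨[], Γ', 0, b, by simp [MCJ], hE, hy, ?_, by omega⟩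
      funext z
      by_cases h' : z = x <;> simp [Ctx.union, Ctx.single, h', hy]
    · have hyx : ¬ y = x := fun h => hxy h.symm
      have hx : Ctx.union (Ctx.single y M) Γ' x = Γ' x := by
        simp [Ctx.union, Ctx.single, hxy]
      rw [hx] at hne ⊢
      obtain ⟨c', w1, w2, hlk, hM', hE', rfl⟩ := EJ_lookup e hE hne
      refine ⟨c', w1, a + w2, by simp [Env.lookup, hxy, hlk], hM', ?_, by omega⟩
      simp only [EJ]
      refine ⟨M, Γ'.remove x, a, w2, hM, hE', by simp [Ctx.remove, hy, hxy], ?_, rfl⟩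
      funext z
      by_cases h' : z = x
      · simp [Ctx.remove, Ctx.union, Ctx.single, h', hxy, hyx]
      · by_cases h'' : z = y <;>
          simp [Ctx.remove, Ctx.union, Ctx.single, h', h'', hyx]

theorem EJ_single : ∀ (e : Env) {x : ℕ} {c : Clo} {M : List LTy} {w : ℕ},
    e.lookup x = some c → MCJ c M w → EJ e (Ctx.single x M) w
  | .nil, x, c, M, w, hlk, _ => by simp [Env.lookup] at hlk
  | .cons y c' e, x, c, M, w, hlk, hM => by
    simp only [Env.lookup] at hlk
    by_cases hxy : x = y
    · subst hxy
      rw [if_pos rfl] at hlk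
      injection hlk with hlk
      subst hlk
      simp only [EJ]
      refine ⟨M, Ctx.empty, w, 0, hM, EJ_empty e, rfl, ?_, by omega⟩
      funext z
      by_cases h' : z = x <;> simp [Ctx.union, Ctx.single, Ctx.empty, h']
    · rw [if_neg hxy] at hlk
      have hyx : ¬ y = x := fun h => hxy h.symm
      have hE := EJ_single e hlk hM
      simp only [EJ]
      refine ⟨[], Ctx.single x M, 0, w, by simp [MCJ], hE, by simp [Ctx.single, hyx], ?_, by omega⟩
      funext z
      by_cases h' : z = y <;> simp [Ctx.union, Ctx.single, h', hxy, hyx]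

theorem MJ_to_MCJ : ∀ {M : List LTy} {Δ : Ctx} {u : Tm} {v : ℕ} {e : Env} {v' : ℕ},
    MJ Δ u M v → EJ e Δ v' → MCJ (.mk u e) M (v + v') := by
  intro M
  induction M with
  | nil =>
    intro Δ u v e v' hMJ hE
    cases hMJ
    have := EJ_empty_inv e hE
    simp [MCJ]; omega
  | cons A l ih =>
    intro Δ u v e v' hMJ hE
    cases hMJ with
    | cons h1 h2 =>
      obtain ⟨a, b, hEa, hEb, rfl⟩ := EJ_split e hE
      rename_i Δ1 Δ2 p q
      have hc : CJ (Clo.mk u e) A (p + a) := by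
        simp only [CJ]; exact ⟨Δ1, p, a, h1, hEa, rfl⟩
      have hm : MCJ (Clo.mk u e) l (q + b) := ih h2 hEb
      simp only [MCJ]
      exact ⟨p + a, q + b, hc, hm, by omega⟩

theorem MCJ_to_MJ : ∀ {M : List LTy} {u : Tm} {e : Env} {w : ℕ},
    MCJ (.mk u e) M w → ∃ Δ v v', MJ Δ u M v ∧ EJ e Δ v' ∧ w = v + v' := by
  intro M
  induction M with
  | nil =>
    intro u e w h
    simp only [MCJ] at h
    exact ⟨Ctx.empty, 0, 0, MJ.nil, EJ_empty e, by omega⟩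
  | cons A l ih =>
    intro u e w h
    simp only [MCJ, CJ] at h
    obtain ⟨w1, w2, ⟨Δ1, p, a, hT, hEa, rfl⟩, hl, rfl⟩ := h
    obtain ⟨Δ2, q, b, hMJ, hEb, rfl⟩ := ih hl
    exact ⟨Ctx.union Δ1 Δ2, p + q, a + b, MJ.cons hT hMJ, EJ_merge e hEa hEb, by omega⟩
/-! ### State typing -/

def STJ (s : State) (w : ℕ) : Prop :=
  ∃ Γ A w1 w2 w3, TJ Γ s.tm A w1 ∧ EJ s.env Γ w2 ∧ SJ s.stk A w3 ∧ w = w1 + w2 + w3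

theorem subject_reduction {s s' : State} {w : ℕ} (hstep : KAM s s') (h : STJ s w) :
    ∃ w', w = w' + 1 ∧ STJ s' w' := by
  obtain ⟨Γ0, A0, w1, w2, w3, hT, hE, hS, rfl⟩ := h
  cases hstep with
  | sea =>
    rename_i t u e S
    cases hT with
    | app hT1 hMJ =>
      rename_i Γ Δ M wt wu
      obtain ⟨a, b, hEa, hEb, rfl⟩ := EJ_split e hE
      have hMC : MCJ (Clo.mk u e) M (wu + b) := MJ_to_MCJ hMJ hEb
      exact ⟨wt + a + ((wu + b) + w3), by omega,
        Γ, LTy.arr M A0, wt, a, (wu + b) + w3, hT1, hEa, SJ.cons hMC hS, rfl⟩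
  | beta =>
    rename_i x t e c S
    cases hS with
    | cons hMC hS' =>
      rename_i M A wa wb
      cases hT with
      | lam hT' =>
        rename_i Γ wt
        refine ⟨wt + (wa + w2) + wb, by omega,
          Γ, A, wt, wa + w2, wb, hT', ?_, hS', rfl⟩
        simp only [EJ]
        exact ⟨Γ x, Γ.remove x, wa, w2, hMC, hE, ctx_remove_self _ _, ctx_decomp _ _, rfl⟩
  | sub hlk =>
    rename_i x e e' u S
    cases hT
    have hne : Ctx.single x [A0] x ≠ [] := by simp [Ctx.single]
    obtain ⟨c, wa, wb, hlk', hMC, hE', rfl⟩ := EJ_lookup e hE hne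
    rw [hlk] at hlk'
    injection hlk' with hceq
    subst hceq
    have hrem : (Ctx.single x [A0]).remove x = Ctx.empty := by
      funext z; by_cases h' : z = x <;> simp [Ctx.remove, Ctx.single, Ctx.empty, h']
    have hb0 : wb = 0 := EJ_empty_inv e (hrem ▸ hE')
    have hsx : Ctx.single x [A0] x = [A0] := by simp [Ctx.single]
    rw [hsx] at hMC
    simp only [MCJ, CJ] at hMC
    obtain ⟨p, q, ⟨Δ, p1, p2, hTu, hEu, rfl⟩, hq, rfl⟩ := hMC
    exact ⟨p1 + p2 + w3, by omega, Δ, A0, p1, p2, w3, hTu, hEu, hS, rfl⟩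

theorem subject_expansion {s s' : State} {w : ℕ} (hstep : KAM s s') (h : STJ s' w) :
    STJ s (w + 1) := by
  obtain ⟨Γ0, A0, w1, w2, w3, hT, hE, hS, rfl⟩ := h
  cases hstep with
  | sea =>
    rename_i t u e S
    cases hS with
    | cons hMC hS' =>
      rename_i M A wa wb
      obtain ⟨Δ, v, v', hMJ, hEu, rfl⟩ := MCJ_to_MJ hMC
      exact ⟨Ctx.union Γ0 Δ, A, w1 + v + 1, w2 + v', wb,
        TJ.app hT hMJ, EJ_merge e hE hEu, hS', by omega⟩
  | beta =>
    rename_i x t e c S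
    simp only [EJ] at hE
    obtain ⟨M, Γ', wa, wb, hMC, hE', hx, rfl, rfl⟩ := hE
    have hGx : Ctx.union (Ctx.single x M) Γ' x = M := by simp [Ctx.union, Ctx.single, hx]
    have hrem : (Ctx.union (Ctx.single x M) Γ').remove x = Γ' := by
      funext z
      by_cases h' : z = x
      · simp [Ctx.remove, Ctx.union, Ctx.single, h', hx]
      · simp [Ctx.remove, Ctx.union, Ctx.single, h']
    have hlam := TJ.lam (x := x) hT
    rw [hGx, hrem] at hlam
    exact ⟨Γ', LTy.arr M A0, w1 + 1, wb, wa + w3, hlam, hE', SJ.cons hMC hS, by omega⟩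
  | sub hlk =>
    rename_i x e e' u S
    have hc : CJ (Clo.mk u e') A0 (w1 + w2) := by
      simp only [CJ]; exact ⟨Γ0, w1, w2, hT, hE, rfl⟩
    have hMC : MCJ (Clo.mk u e') [A0] (w1 + w2) := by
      simp only [MCJ]; exact ⟨w1 + w2, 0, hc, by simp [MCJ], by omega⟩
    exact ⟨Ctx.single x [A0], A0, 1, w1 + w2, w3, TJ.var, EJ_single e hlk hMC, hS, by omega⟩

theorem progress {s : State} {w : ℕ} (h : STJ s w) (hfin : Final s) : w = 0 := by
  obtain ⟨t, e, S⟩ := s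
  obtain ⟨Γ0, A0, w1, w2, w3, hT, hE, hS, rfl⟩ := h
  cases t with
  | app t u => exact absurd KAM.sea (hfin _)
  | var x =>
    cases hT
    have hne : Ctx.single x [A0] x ≠ [] := by simp [Ctx.single]
    obtain ⟨c, wa, wb, hlk, -, -, -⟩ := EJ_lookup e hE hne
    obtain ⟨u, e'⟩ := c
    exact absurd (KAM.sub hlk) (hfin _)
  | lam x t =>
    cases S with
    | cons c S => exact absurd KAM.beta (hfin _)
    | nil =>
      cases hS
      cases hT
      have := EJ_empty_inv e hE
      omega
/-! ### Well-formedness (closedness) invariant -/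

mutual
def CloWF : Clo → Prop
  | .mk t e => (∀ x ∈ fv t, (e.lookup x).isSome) ∧ EnvWF e
def EnvWF : Env → Prop
  | .nil => True
  | .cons _ c e => CloWF c ∧ EnvWF e
end

theorem EnvWF_lookup : ∀ (e : Env), EnvWF e → ∀ {x : ℕ} {c : Clo},
    e.lookup x = some c → CloWF c
  | .nil, _, x, c, hlk => by simp [Env.lookup] at hlk
  | .cons y c' e, hwf, x, c, hlk => by
    simp only [EnvWF] at hwf
    simp only [Env.lookup] at hlk
    by_cases hxy : x = y
    · rw [if_pos hxy] at hlk
      injection hlk with hlk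
      exact hlk ▸ hwf.1
    · rw [if_neg hxy] at hlk
      exact EnvWF_lookup e hwf.2 hlk

def SWF (s : State) : Prop := CloWF (.mk s.tm s.env) ∧ ∀ c ∈ s.stk, CloWF c

theorem SWF_step {s s' : State} (hstep : KAM s s') (h : SWF s) : SWF s' := by
  obtain ⟨hc, hS⟩ := h
  simp only [CloWF] at hc
  cases hstep with
  | sea =>
    refine ⟨⟨fun x hx => hc.1 x ?_, hc.2⟩, ?_⟩
    · simp only [fv, Finset.mem_union]; exact Or.inl hx
    · intro c hcS
      rcases List.mem_cons.1 hcS with rfl | hcS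
      · exact ⟨fun x hx => hc.1 x (by simp only [fv, Finset.mem_union]; exact Or.inr hx), hc.2⟩
      · exact hS c hcS
  | beta =>
    rename_i x t e c S
    have hcwf : CloWF c := hS c (List.mem_cons_self)
    refine ⟨⟨fun y hy => ?_, ?_⟩, fun c' hc' => hS c' (List.mem_cons_of_mem _ hc')⟩
    · simp only [Env.lookup]
      by_cases hyx : y = x
      · simp [hyx]
      · rw [if_neg hyx]
        exact hc.1 y (by simp [fv, Finset.mem_sdiff, hy, hyx])
    · simp only [EnvWF]; exact ⟨hcwf, hc.2⟩
  | sub hlk =>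
    exact ⟨EnvWF_lookup _ hc.2 hlk, hS⟩

theorem SWF_run {s s' : State} {n : ℕ} (hrun : RunLen s s' n) (h : SWF s) : SWF s' := by
  induction hrun with
  | refl => exact h
  | step hstep _ ih => exact ih (SWF_step hstep (by assumption))

theorem final_shape {s : State} (hfin : Final s) (hwf : SWF s) :
    ∃ x t e, s = ⟨.lam x t, e, []⟩ := by
  obtain ⟨t, e, S⟩ := s
  obtain ⟨hc, hS⟩ := hwf
  simp only [CloWF] at hc
  cases t with
  | app t u => exact absurd KAM.sea (hfin _)
  | var x =>
    have hx := hc.1 x (by simp [fv])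
    obtain ⟨c, hlk⟩ := Option.isSome_iff_exists.1 hx
    obtain ⟨u, e'⟩ := c
    exact absurd (KAM.sub hlk) (hfin _)
  | lam x t =>
    cases S with
    | cons c S => exact absurd KAM.beta (hfin _)
    | nil => exact ⟨x, t, e, rfl⟩

/-! ### Assembling the two directions -/

theorem STJ_of_run {s sf : State} {n : ℕ} (hrun : RunLen s sf n) (h : STJ sf 0) :
    STJ s n := by
  induction hrun with
  | refl => exact h
  | step hstep _ ih => exact subject_expansion hstep (ih h)

theorem run_of_STJ : ∀ (w : ℕ) (s : State), STJ s w → ∃ sf, RunLen s sf w ∧ Final sf := by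
  intro w
  induction w using Nat.strong_induction_on with
  | _ w ih =>
    intro s h
    by_cases hfin : Final s
    · have h0 := progress h hfin
      subst h0
      exact ⟨s, RunLen.refl s, hfin⟩
    · have hex : ∃ s', KAM s s' := by
        simpa [Final, not_forall] using hfin
      obtain ⟨s', hstep⟩ := hex
      obtain ⟨w', rfl, hSTJ'⟩ := subject_reduction hstep h
      obtain ⟨sf, hrun, hf⟩ := ih w' (by omega) s' hSTJ'
      exact ⟨sf, RunLen.step hstep hrun, hf⟩
/-- de Carvalho's correspondence: a closed term `t` has a
complete KAM run of length `w` iff `⊢^w t : ⋆` is derivable in the multi type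
system with the additive weight assignment. -/
theorem deCarvalho {t : Tm} {w : ℕ} (hclosed : fv t = ∅) :
    (∃ sf, RunLen ⟨t, Env.nil, []⟩ sf w ∧ Final sf) ↔
    TJ Ctx.empty t LTy.star w := by
  constructor
  · rintro ⟨sf, hrun, hfin⟩
    have hwf0 : SWF ⟨t, Env.nil, []⟩ := by
      refine ⟨⟨fun x hx => ?_, by simp [EnvWF]⟩, by simp⟩
      rw [hclosed] at hx
      simp at hx
    have hwf := SWF_run hrun hwf0
    obtain ⟨x, t', e, rfl⟩ := final_shape hfin hwf
    have hSTJf : STJ ⟨.lam x t', e, []⟩ 0 :=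
      ⟨Ctx.empty, .star, 0, 0, 0, TJ.lamStar, EJ_empty e, SJ.nil, rfl⟩
    have hSTJ := STJ_of_run hrun hSTJf
    obtain ⟨Γ0, A0, w1, w2, w3, hT, hE, hS, heq⟩ := hSTJ
    simp only [EJ] at hE
    obtain ⟨rfl, rfl⟩ := hE
    cases hS
    have hw : w = w1 := by omega
    subst hw
    exact hT
  · intro hTJ
    have hSTJ : STJ ⟨t, Env.nil, []⟩ w :=
      ⟨Ctx.empty, .star, w, 0, 0, hTJ, by simp [EJ], SJ.nil, by omega⟩
    exact run_of_STJ w _ hSTJ
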